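/- arXiv:2111.08565 — 3 statements merged into one kernel-verified Lean document; each statement's English description precedes it below -/
import Mathlib

section
/- Let H be the 4×4 antisymmetric matrix with H_{ij} = 1 for i < j, H_{ij} = -1 for i > j. For every η > 0, the matrix I + η·H is invertible, and every eigenvalue μ of (I + η·H)⁻¹·H satisfies |1 - η·μ| < 1. -/
/-!
Since `H` is real and antisymmetric it is skew-Hermitian, so `Re ⟪v, H v⟫ = 0` for every `v`.
Hence `1 + η H` is injective, and every eigenvalue `λ` of `H` is purely imaginary; it is
nonzero because `det H = 1`. An eigenvector of `(1 + η H)⁻¹ H` with eigenvalue `μ` is an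
eigenvector of `H` with eigenvalue `λ = μ / (1 - η μ)`, so `1 - η μ = (1 + η λ)⁻¹`, and
`‖1 + η λ‖² = 1 + η² ‖λ‖² > 1`.
-/

open Matrix ComplexOrder

theorem Complex.one_lt_norm_one_add_of_re_eq_zero {z : ℂ} (hre : z.re = 0) (hz : z ≠ 0) :
    1 < ‖1 + z‖ := by
  have him : z.im ≠ 0 := fun h => hz (Complex.ext hre h)
  have hsq : ‖1 + z‖ ^ 2 = 1 + z.im ^ 2 := by
    rw [Complex.sq_norm, Complex.normSq_apply]
    simp only [add_re, one_re, hre, add_zero, mul_one, add_im, one_im, zero_add]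
    ring
  rw [← one_lt_sq_iff₀ (norm_nonneg _), hsq]
  linarith [pow_pos (abs_pos.2 him) 2, sq_abs z.im]

namespace Matrix

variable {n : Type*} [Fintype n] {A : Matrix n n ℂ}

theorem star_dotProduct_self_pos {v : n → ℂ} (hv : v ≠ 0) : 0 < star v ⬝ᵥ v :=
  (dotProduct_star_self_nonneg v).lt_of_ne' (dotProduct_star_self_eq_zero.not.2 hv)

theorem re_star_dotProduct_mulVec_eq_zero_of_mem_skewAdjoint
    (hA : A ∈ skewAdjoint (Matrix n n ℂ)) (v : n → ℂ) : (star v ⬝ᵥ A *ᵥ v).re = 0 := by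
  have h : star (star v ⬝ᵥ A *ᵥ v) = -(star v ⬝ᵥ A *ᵥ v) := by
    rw [← star_dotProduct_star, star_star, star_mulVec, ← dotProduct_mulVec,
      ← star_eq_conjTranspose, skewAdjoint.mem_iff.1 hA, neg_mulVec, dotProduct_neg]
  have h_re := congrArg Complex.re h
  rw [Complex.star_def, Complex.conj_re, Complex.neg_re] at h_re
  linarith

theorem re_eq_zero_of_mulVec_eq_smul_of_mem_skewAdjoint (hA : A ∈ skewAdjoint (Matrix n n ℂ))
    {v : n → ℂ} (hv : v ≠ 0) {c : ℂ} (h : A *ᵥ v = c • v) : c.re = 0 := by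
  obtain ⟨hpos, him⟩ := Complex.pos_iff.1 (star_dotProduct_self_pos hv)
  have h_re := re_star_dotProduct_mulVec_eq_zero_of_mem_skewAdjoint hA v
  rw [h, dotProduct_smul, smul_eq_mul, Complex.mul_re, ← him, mul_zero, sub_zero] at h_re
  exact (mul_eq_zero.1 h_re).resolve_right hpos.ne'

variable [DecidableEq n]

theorem isUnit_det_one_add_smul_of_mem_skewAdjoint (hA : A ∈ skewAdjoint (Matrix n n ℂ))
    (η : ℝ) : IsUnit (1 + (η : ℂ) • A).det := by
  rw [isUnit_iff_ne_zero, Ne, ← exists_mulVec_eq_zero_iff]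
  rintro ⟨v, hv, h⟩
  have h_re := congrArg Complex.re (congrArg (star v ⬝ᵥ ·) h)
  simp only [add_mulVec, one_mulVec, smul_mulVec, dotProduct_add, dotProduct_smul,
    dotProduct_zero, smul_eq_mul, Complex.add_re, Complex.re_ofReal_mul,
    re_star_dotProduct_mulVec_eq_zero_of_mem_skewAdjoint hA, mul_zero, add_zero,
    Complex.zero_re] at h_re
  exact (Complex.pos_iff.1 (star_dotProduct_self_pos hv)).1.ne' h_re

theorem norm_one_sub_mul_lt_one_of_mem_skewAdjoint (hA : A ∈ skewAdjoint (Matrix n n ℂ))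
    (hdet : A.det ≠ 0) {η : ℝ} (hη : η ≠ 0) {μ : ℂ} {v : n → ℂ} (hv : v ≠ 0)
    (h : ((1 + (η : ℂ) • A)⁻¹ * A) *ᵥ v = μ • v) : ‖1 - (η : ℂ) * μ‖ < 1 := by
  have hAv : (1 - (η : ℂ) * μ) • A *ᵥ v = μ • v := by
    have h' := congrArg ((1 + (η : ℂ) • A) *ᵥ ·) h
    simp only [mulVec_mulVec, mul_nonsing_inv_cancel_left _ _
      (isUnit_det_one_add_smul_of_mem_skewAdjoint hA η)] at h'
    rw [mulVec_smul, add_mulVec, one_mulVec, smul_mulVec, smul_add, smul_smul, mul_comm μ] at h'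
    rw [sub_smul, one_smul, sub_eq_iff_eq_add]
    exact h'
  have hμ : μ ≠ 0 := by
    rintro rfl
    simp only [mul_zero, sub_zero, one_smul, zero_smul] at hAv
    exact hdet (exists_mulVec_eq_zero_iff.1 ⟨v, hv, hAv⟩)
  set c := 1 - (η : ℂ) * μ
  have hc : c ≠ 0 := by
    intro hc
    rw [hc, zero_smul, eq_comm, smul_eq_zero] at hAv
    exact hAv.elim hμ hv
  have heig : A *ᵥ v = (μ / c) • v := by
    rw [div_eq_inv_mul, ← smul_smul, ← hAv, smul_smul, inv_mul_cancel₀ hc, one_smul]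
  have hre : ((η : ℂ) * (μ / c)).re = 0 := by
    rw [Complex.re_ofReal_mul, re_eq_zero_of_mulVec_eq_smul_of_mem_skewAdjoint hA hv heig,
      mul_zero]
  have hne : (η : ℂ) * (μ / c) ≠ 0 := mul_ne_zero (by exact_mod_cast hη) (div_ne_zero hμ hc)
  have hinv : c = (1 + (η : ℂ) * (μ / c))⁻¹ := by
    refine eq_inv_of_mul_eq_one_left ?_
    field_simp
    ring
  rw [hinv, norm_inv]
  exact inv_lt_one_of_one_lt₀ (Complex.one_lt_norm_one_add_of_re_eq_zero hre hne)

end Matrix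

theorem example_game_pcgd_contracts (η : ℝ) (hη : 0 < η) :
    let H : Matrix (Fin 4) (Fin 4) ℂ :=
      !![0, 1, 1, 1; -1, 0, 1, 1; -1, -1, 0, 1; -1, -1, -1, 0]
    IsUnit (1 + (η : ℂ) • H) ∧
      ∀ μ : ℂ, (∃ v : Fin 4 → ℂ, v ≠ 0 ∧
          ((1 + (η : ℂ) • H)⁻¹ * H).mulVec v = μ • v) →
        ‖1 - (η : ℂ) * μ‖ < 1 := by
  intro H
  have hskew : H ∈ skewAdjoint (Matrix (Fin 4) (Fin 4) ℂ) := by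
    rw [skewAdjoint.mem_iff, star_eq_conjTranspose]
    ext i j
    fin_cases i <;> fin_cases j <;> simp [H]
  have hdet : H.det = 1 := by
    simp [H, det_succ_row_zero, Fin.sum_univ_succ, Fin.succAbove]
    norm_num
  refine ⟨(isUnit_iff_isUnit_det _).2 (isUnit_det_one_add_smul_of_mem_skewAdjoint hskew η), ?_⟩
  rintro μ ⟨v, hv, h⟩
  exact norm_one_sub_mul_lt_one_of_mem_skewAdjoint hskew (hdet ▸ one_ne_zero) hη.ne' hv h
end

section
/- Let H be a real invertible d×d matrix with symmetric part S = (H + Hᵀ)/2 positive semidefinite, antisymmetric part A = (H - Hᵀ)/2, and suppose H = A (i.e., S = 0). Then for every η > 0 and every complex eigenvalue μ of (I + η·H_o)⁻¹·H where H_o = H, the iteration matrix I - η·(I + η·H)⁻¹·H has all eigenvalues strictly inside the unit circle. -/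
/-!
The complexification of `η H` is a skew-Hermitian matrix `B`, so every eigenvalue `μ` of `B` is
purely imaginary, and nonzero because `H` is invertible. The iteration matrix is `(1 + B)⁻¹`, whose
eigenvalues are the `(1 + μ)⁻¹`, of modulus `(1 + |μ|²)^(-1/2) < 1`.
-/

open Matrix

namespace Matrix

variable {n : Type*} [Fintype n]

theorem re_star_dotProduct_mulVec_eq_zero {A : Matrix n n ℂ} (hA : Aᴴ = -A) (v : n → ℂ) :
    (star v ⬝ᵥ A *ᵥ v).re = 0 := by
  have hconj : star (star v ⬝ᵥ A *ᵥ v) = -(star v ⬝ᵥ A *ᵥ v) := by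
    rw [← star_dotProduct, star_mulVec, hA, vecMul_neg, neg_dotProduct, ← dotProduct_mulVec]
  have hre := congrArg Complex.re hconj
  rw [Complex.star_def, Complex.conj_re, Complex.neg_re] at hre
  linarith

open scoped ComplexOrder in
theorem re_eq_zero_of_mulVec_eq_smul {A : Matrix n n ℂ} (hA : Aᴴ = -A) {v : n → ℂ} (hv : v ≠ 0)
    {μ : ℂ} (h : A *ᵥ v = μ • v) : μ.re = 0 := by
  obtain ⟨hpos, him⟩ := Complex.pos_iff.mp (dotProduct_star_self_pos_iff.mpr hv)
  have hq := re_star_dotProduct_mulVec_eq_zero hA v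
  rw [h, dotProduct_smul, smul_eq_mul, Complex.mul_re, ← him, mul_zero, sub_zero] at hq
  exact (mul_eq_zero.mp hq).resolve_right hpos.ne'

variable [DecidableEq n]

theorem isUnit_one_add_of_conjTranspose_eq_neg {B : Matrix n n ℂ} (hB : Bᴴ = -B) :
    IsUnit (1 + B) := by
  rw [isUnit_iff_isUnit_det, isUnit_iff_ne_zero]
  intro hdet
  obtain ⟨v, hv, hker⟩ := exists_mulVec_eq_zero_iff.mpr hdet
  rw [add_mulVec, one_mulVec] at hker
  have hBv : B *ᵥ v = (-1 : ℂ) • v := by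
    rw [neg_one_smul]
    exact eq_neg_of_add_eq_zero_right hker
  simpa using re_eq_zero_of_mulVec_eq_smul hB hv hBv

theorem one_sub_nonsing_inv_one_add_mul {R : Type*} [CommRing R] {A : Matrix n n R}
    (hA : IsUnit (1 + A)) : 1 - (1 + A)⁻¹ * A = (1 + A)⁻¹ := by
  calc 1 - (1 + A)⁻¹ * A = (1 + A)⁻¹ * (1 + A) - (1 + A)⁻¹ * A := by
        rw [nonsing_inv_mul _ ((isUnit_iff_isUnit_det _).mp hA)]
    _ = (1 + A)⁻¹ := by rw [← mul_sub, add_sub_cancel_right, mul_one]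

theorem norm_lt_one_of_nonsing_inv_one_add_mulVec_eq_smul {B : Matrix n n ℂ} (hB : Bᴴ = -B)
    (hBu : IsUnit B) {v : n → ℂ} (hv : v ≠ 0) {ν : ℂ} (h : (1 + B)⁻¹ *ᵥ v = ν • v) :
    ‖ν‖ < 1 := by
  have hdet := (isUnit_iff_isUnit_det _).mp (isUnit_one_add_of_conjTranspose_eq_neg hB)
  have hv' : v = ν • ((1 + B) *ᵥ v) := by
    rw [← mulVec_smul, ← h, mulVec_mulVec, mul_nonsing_inv _ hdet, one_mulVec]
  have hν : ν ≠ 0 := by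
    rintro rfl
    exact hv (by simpa using hv')
  have hBv : B *ᵥ v = (ν⁻¹ - 1) • v := by
    have h1 : (1 + B) *ᵥ v = ν⁻¹ • v := (eq_inv_smul_iff₀ hν).mpr hv'.symm
    rw [add_mulVec, one_mulVec] at h1
    rw [sub_smul, one_smul, ← h1, add_sub_cancel_left]
  have hre := re_eq_zero_of_mulVec_eq_smul hB hv hBv
  have him : (ν⁻¹).im ≠ 0 := by
    intro him0
    have hzero : ν⁻¹ - 1 = 0 := Complex.ext (by simpa using hre) (by simpa using him0)
    rw [hzero, zero_smul] at hBv
    exact (isUnit_iff_ne_zero.mp ((isUnit_iff_isUnit_det B).mp hBu))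
      (exists_mulVec_eq_zero_iff.mp ⟨v, hv, hBv⟩)
  have hnorm : 1 < ‖ν⁻¹‖ := by
    have hre' : (ν⁻¹).re = 1 := by simpa [sub_eq_zero] using hre
    simpa [hre'] using Complex.abs_re_lt_norm.mpr him
  rw [norm_inv] at hnorm
  rw [← inv_inv ‖ν‖]
  exact inv_lt_one_of_one_lt₀ hnorm

end Matrix

/-- If the game Hessian `H` is invertible and purely antisymmetric (`S = 0`, `H_o = H`),
then for every step size `η > 0` the PCGD iteration matrix
`I - η (I + η H)⁻¹ H` has all complex eigenvalues strictly inside the unit circle. -/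
theorem pcgd_contracts_antisymmetric (d : ℕ) (H : Matrix (Fin d) (Fin d) ℝ)
    (hinv : IsUnit H) (hanti : H.transpose = -H) (η : ℝ) (hη : 0 < η) :
    let Hc : Matrix (Fin d) (Fin d) ℂ := H.map (Complex.ofReal)
    IsUnit (1 + (η : ℂ) • Hc) ∧
      ∀ ν : ℂ, (∃ v : Fin d → ℂ, v ≠ 0 ∧
          ((1 - (η : ℂ) • ((1 + (η : ℂ) • Hc)⁻¹ * Hc)).mulVec v) = ν • v) →
        ‖ν‖ < 1 := by
  intro Hc
  have hHc : Hcᴴ = -Hc := by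
    rw [conjTranspose, ← transpose_map, hanti]
    ext i j
    simp [Hc]
  have hB : ((η : ℂ) • Hc)ᴴ = -((η : ℂ) • Hc) := by
    rw [conjTranspose_smul, hHc, Complex.star_def, Complex.conj_ofReal, smul_neg]
  have hBu : IsUnit ((η : ℂ) • Hc) := by
    rw [isUnit_iff_isUnit_det, det_smul]
    exact (isUnit_iff_ne_zero.mpr (Complex.ofReal_ne_zero.mpr hη.ne')).pow _ |>.mul
      ((isUnit_iff_isUnit_det Hc).mp (hinv.map Complex.ofRealHom.mapMatrix))
  have hU := isUnit_one_add_of_conjTranspose_eq_neg hB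
  have hM : 1 - (η : ℂ) • ((1 + (η : ℂ) • Hc)⁻¹ * Hc) = (1 + (η : ℂ) • Hc)⁻¹ := by
    rw [← Matrix.mul_smul, one_sub_nonsing_inv_one_add_mul hU]
  refine ⟨hU, ?_⟩
  rintro ν ⟨v, hv, hev⟩
  rw [hM] at hev
  exact norm_lt_one_of_nonsing_inv_one_add_mulVec_eq_smul hB hBu hv hev
end

section
/- Let H be a real d×d matrix with positive semidefinite symmetric part S and let H_o = A + S_o where A is the antisymmetric part of H and S_o the off-block-diagonal part of S. Assume H is invertible and 0 < η < 1/(4‖S‖). Then I + η·H_o is invertible and every complex eigenvalue μ of (I + η·H_o)⁻¹·H satisfies |1 - η·μ| < 1. -/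
/-!
Since `H_o = H - S_d`, we have `1 + η H_o = η H + P` with `P = 1 - η S_d`. Writing `x_a` for the
restriction of `x` to block `a`, `xᵀ S_d x = ∑ₐ x_aᵀ S x_a ≤ ‖S‖ ‖x‖²`, so `P` is positive definite
once `η ‖S‖ < 1`. The complexification `K` of `H` is accretive, `Re v* K v = v* S v ≥ 0`, hence
`η K + P` is invertible. If `K v = μ (η K + P) v` with `v ≠ 0`, put `k = v* K v` and
`p = v* P v > 0`; then `1 - η μ = p / (p + η k)` with `k ≠ 0` (as `K` is invertible) and
`Re k ≥ 0`, whence `|1 - η μ| < 1`.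
-/

open Matrix
open scoped ComplexOrder

theorem Complex.norm_ofReal_div_ofReal_add_lt_one {r : ℝ} (hr : 0 < r) {z : ℂ} (hz : 0 ≤ z.re)
    (hz₀ : z ≠ 0) : ‖(r : ℂ) / (r + z)‖ < 1 := by
  have hre : r ≤ ((r : ℂ) + z).re := by simpa using hz
  have hlt : r < ‖(r : ℂ) + z‖ := by
    by_cases him : z.im = 0
    · have hz' : 0 < z.re := hz.lt_of_ne fun h => hz₀ (Complex.ext h.symm him)
      calc r < ((r : ℂ) + z).re := by simpa using hz'
        _ ≤ ‖(r : ℂ) + z‖ := Complex.re_le_norm _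
    · calc r ≤ |((r : ℂ) + z).re| := hre.trans (le_abs_self _)
        _ < ‖(r : ℂ) + z‖ := Complex.abs_re_lt_norm.mpr (by simpa using him)
  rw [norm_div, Complex.norm_real, Real.norm_of_nonneg hr.le, div_lt_one (hr.trans hlt)]
  exact hlt

namespace Matrix

variable {n : Type*}

theorem dotProduct_transpose_mulVec_self {R : Type*} [Fintype n] [CommSemiring R]
    (P : Matrix n n R) (x : n → R) : x ⬝ᵥ (Pᵀ *ᵥ x) = x ⬝ᵥ (P *ᵥ x) := by
  rw [dotProduct_mulVec, vecMul_transpose, dotProduct_comm]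

section Complex

variable [Fintype n] {K P : Matrix n n ℂ} {η : ℝ}

theorem re_star_dotProduct_smul_add_mulVec_pos (hK : ∀ v, 0 ≤ (star v ⬝ᵥ (K *ᵥ v)).re)
    (hP : P.PosDef) (hη : 0 ≤ η) {v : n → ℂ} (hv : v ≠ 0) :
    0 < (star v ⬝ᵥ (((η : ℂ) • K + P) *ᵥ v)).re := by
  have hPv := (Complex.pos_iff.mp (hP.dotProduct_mulVec_pos hv)).1
  simp only [add_mulVec, smul_mulVec, dotProduct_add, dotProduct_smul, smul_eq_mul,
    Complex.add_re, Complex.re_ofReal_mul]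
  nlinarith [hK v]

variable [DecidableEq n]

theorem isUnit_smul_add_of_posDef (hK : ∀ v, 0 ≤ (star v ⬝ᵥ (K *ᵥ v)).re)
    (hP : P.PosDef) (hη : 0 ≤ η) : IsUnit ((η : ℂ) • K + P) := by
  rw [isUnit_iff_isUnit_det, isUnit_iff_ne_zero]
  intro hdet
  obtain ⟨v, hv, hMv⟩ := exists_mulVec_eq_zero_iff.mpr hdet
  have := re_star_dotProduct_smul_add_mulVec_pos hK hP hη hv
  rw [hMv, dotProduct_zero, Complex.zero_re] at this
  exact this.false

theorem norm_one_sub_mul_eigenvalue_lt_one (hK : ∀ v, 0 ≤ (star v ⬝ᵥ (K *ᵥ v)).re)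
    (hKu : IsUnit K) (hP : P.PosDef) (hη : 0 < η) {μ : ℂ} {v : n → ℂ} (hv : v ≠ 0)
    (hμ : (((η : ℂ) • K + P)⁻¹ * K) *ᵥ v = μ • v) : ‖1 - (η : ℂ) * μ‖ < 1 := by
  set M := (η : ℂ) • K + P
  have hMu : IsUnit M.det := (isUnit_iff_isUnit_det M).mp (isUnit_smul_add_of_posDef hK hP hη.le)
  have hKv : K *ᵥ v = μ • (M *ᵥ v) := by
    rw [← mulVec_smul, ← hμ, mulVec_mulVec, ← Matrix.mul_assoc, mul_nonsing_inv _ hMu,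
      Matrix.one_mul]
  set k := star v ⬝ᵥ (K *ᵥ v)
  set p := star v ⬝ᵥ (P *ᵥ v)
  obtain ⟨hp, hp_im⟩ := Complex.pos_iff.mp (hP.dotProduct_mulVec_pos hv)
  have hp_real : p = (p.re : ℂ) := Complex.ext rfl (by rw [Complex.ofReal_im]; exact hp_im.symm)
  have hm : star v ⬝ᵥ (M *ᵥ v) = p + η * k := by
    simp only [M, add_mulVec, smul_mulVec, dotProduct_add, dotProduct_smul, smul_eq_mul]
    ring
  have hm₀ : p + η * k ≠ 0 := by
    rw [← hm]
    exact fun h0 => (re_star_dotProduct_smul_add_mulVec_pos hK hP hη.le hv).ne'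
      ((congrArg Complex.re h0).trans Complex.zero_re)
  have hkμ : k = μ * (p + η * k) := by
    rw [← hm, ← smul_eq_mul, ← dotProduct_smul, ← hKv]
  have heq : 1 - (η : ℂ) * μ = p / (p + η * k) := by
    rw [eq_div_iff hm₀]
    linear_combination (η : ℂ) * hkμ
  have hk₀ : k ≠ 0 := by
    rintro h0
    have hμ0 : μ = 0 := (mul_eq_zero.mp (hkμ.symm.trans h0)).resolve_right hm₀
    exact hv (mulVec_injective_iff_isUnit.mpr hKu (by simp [hKv, hμ0]))
  rw [heq, hp_real]
  refine Complex.norm_ofReal_div_ofReal_add_lt_one hp ?_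
    (mul_ne_zero (by exact_mod_cast hη.ne') hk₀)
  simpa using mul_nonneg hη.le (hK v)

end Complex

section Real

variable [Fintype n] (P : Matrix n n ℝ)

theorem re_star_dotProduct_map_ofReal_mulVec (v : n → ℂ) :
    (star v ⬝ᵥ (P.map (↑) *ᵥ v)).re =
      (fun i => (v i).re) ⬝ᵥ (P *ᵥ fun i => (v i).re) +
        (fun i => (v i).im) ⬝ᵥ (P *ᵥ fun i => (v i).im) := by
  simp only [dotProduct, mulVec, map_apply, Pi.star_apply, Complex.re_sum, Finset.mul_sum,
    ← Finset.sum_add_distrib]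
  refine Finset.sum_congr rfl fun i _ => Finset.sum_congr rfl fun j _ => ?_
  simp only [Complex.star_def, Complex.mul_re, Complex.mul_im, Complex.conj_re, Complex.conj_im,
    Complex.ofReal_re, Complex.ofReal_im]
  ring

variable {P}

theorem re_star_dotProduct_map_ofReal_mulVec_nonneg (hP : ((1 / 2 : ℝ) • (P + Pᵀ)).PosSemidef)
    (v : n → ℂ) : 0 ≤ (star v ⬝ᵥ (P.map (↑) *ᵥ v)).re := by
  have hQ (x : n → ℝ) : 0 ≤ x ⬝ᵥ (P *ᵥ x) := by
    have := hP.dotProduct_mulVec_nonneg x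
    rwa [star_trivial, smul_mulVec, add_mulVec, dotProduct_smul, dotProduct_add,
      dotProduct_transpose_mulVec_self, smul_eq_mul, ← two_mul, ← mul_assoc,
      one_div_mul_cancel two_ne_zero, one_mul] at this
  rw [re_star_dotProduct_map_ofReal_mulVec]
  exact add_nonneg (hQ _) (hQ _)

theorem PosDef.map_ofReal (hP : P.PosDef) : (P.map ((↑) : ℝ → ℂ)).PosDef := by
  have hPc : (P.map ((↑) : ℝ → ℂ)).IsHermitian :=
    hP.isHermitian.map _ fun r => (Complex.conj_ofReal r).symm
  refine .of_dotProduct_mulVec_pos hPc fun v hv => Complex.pos_iff.mpr ⟨?_, ?_⟩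
  · have hQ (x : n → ℝ) : 0 ≤ x ⬝ᵥ (P *ᵥ x) := by
      simpa using hP.posSemidef.dotProduct_mulVec_nonneg x
    have hQ_pos {x : n → ℝ} (hx : x ≠ 0) : 0 < x ⬝ᵥ (P *ᵥ x) := by
      simpa using hP.dotProduct_mulVec_pos hx
    rw [re_star_dotProduct_map_ofReal_mulVec]
    by_cases hre : (fun i => (v i).re) = 0
    · have him : (fun i => (v i).im) ≠ 0 := fun him =>
        hv (funext fun i => Complex.ext (congrFun hre i) (congrFun him i))
      exact add_pos_of_nonneg_of_pos (hQ _) (hQ_pos him)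
    · exact add_pos_of_pos_of_nonneg (hQ_pos hre) (hQ _)
  · exact (hPc.im_star_dotProduct_mulVec_self v).symm

theorem dotProduct_mulVec_le_opNorm [DecidableEq n] (x : n → ℝ) :
    x ⬝ᵥ (P *ᵥ x) ≤ ‖toEuclideanCLM (𝕜 := ℝ) P‖ * (x ⬝ᵥ x) := by
  set T := toEuclideanCLM (𝕜 := ℝ) P
  set u := WithLp.toLp 2 x
  have hinner (y : n → ℝ) : x ⬝ᵥ y = inner ℝ u (WithLp.toLp 2 y) := by
    simp [EuclideanSpace.inner_eq_star_dotProduct, u, dotProduct_comm]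
  have hu : x ⬝ᵥ x = ‖u‖ ^ 2 := by rw [hinner, ← real_inner_self_eq_norm_sq]
  calc x ⬝ᵥ (P *ᵥ x) = inner ℝ u (T u) := by rw [hinner, toEuclideanCLM_toLp]
    _ ≤ ‖u‖ * ‖T u‖ := real_inner_le_norm _ _
    _ ≤ ‖u‖ * (‖T‖ * ‖u‖) := by gcongr; exact T.le_opNorm u
    _ = ‖T‖ * (x ⬝ᵥ x) := by rw [hu]; ring

end Real

section BlockDiag

variable {ι R : Type*} [DecidableEq ι] (b : n → ι)

def blockDiagPart [Zero R] (S : Matrix n n R) : Matrix n n R :=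
  fun i j => if b i = b j then S i j else 0

def blockRestrict [Zero R] (a : ι) (x : n → R) : n → R :=
  fun i => if b i = a then x i else 0

theorem IsHermitian.blockDiagPart [AddMonoid R] [StarAddMonoid R] {S : Matrix n n R}
    (hS : S.IsHermitian) : (Matrix.blockDiagPart b S).IsHermitian := by
  ext i j
  simp only [conjTranspose_apply, Matrix.blockDiagPart, eq_comm (a := b j)]
  split_ifs <;> simp [hS.apply]

variable [Fintype n] [Fintype ι]

theorem dotProduct_blockDiagPart_mulVec [CommSemiring R] (S : Matrix n n R) (x : n → R) :
    x ⬝ᵥ (blockDiagPart b S *ᵥ x) =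
      ∑ a, blockRestrict b a x ⬝ᵥ (S *ᵥ blockRestrict b a x) := by
  simp only [dotProduct, mulVec, blockDiagPart, blockRestrict, Finset.mul_sum]
  symm
  rw [Finset.sum_comm]
  refine Finset.sum_congr rfl fun i _ => ?_
  rw [Finset.sum_comm]
  refine Finset.sum_congr rfl fun j _ => ?_
  simp only [ite_mul, mul_ite, zero_mul, mul_zero, Finset.sum_ite_eq, Finset.mem_univ, if_true]

theorem sum_blockRestrict_dotProduct_self [CommSemiring R] (x : n → R) :
    ∑ a, blockRestrict b a x ⬝ᵥ blockRestrict b a x = x ⬝ᵥ x := by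
  simp only [dotProduct, blockRestrict]
  rw [Finset.sum_comm]
  simp [ite_mul, mul_ite]

variable [DecidableEq n]

theorem dotProduct_blockDiagPart_mulVec_le (S : Matrix n n ℝ) (x : n → ℝ) :
    x ⬝ᵥ (blockDiagPart b S *ᵥ x) ≤ ‖toEuclideanCLM (𝕜 := ℝ) S‖ * (x ⬝ᵥ x) := by
  rw [dotProduct_blockDiagPart_mulVec, ← sum_blockRestrict_dotProduct_self b x, Finset.mul_sum]
  exact Finset.sum_le_sum fun a _ => dotProduct_mulVec_le_opNorm _

theorem posDef_one_sub_smul_blockDiagPart {S : Matrix n n ℝ} (hS : S.IsHermitian) {η : ℝ}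
    (hη : 0 ≤ η) (hηS : η * ‖toEuclideanCLM (𝕜 := ℝ) S‖ < 1) :
    (1 - η • blockDiagPart b S).PosDef := by
  refine .of_dotProduct_mulVec_pos (isHermitian_one.sub ((hS.blockDiagPart b).smul rfl))
    fun x hx => ?_
  have hxx : 0 < x ⬝ᵥ x := by simpa using dotProduct_self_star_pos_iff.mpr hx
  have hle := mul_le_mul_of_nonneg_left (dotProduct_blockDiagPart_mulVec_le b S x) hη
  rw [star_trivial, sub_mulVec, one_mulVec, smul_mulVec, dotProduct_sub, dotProduct_smul,
    smul_eq_mul]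
  nlinarith [mul_pos (sub_pos.mpr hηS) hxx]

end BlockDiag

end Matrix

/-- Spectral core of the PCGD convergence theorem: if the game Hessian `H` is
invertible, its symmetric part `S` is PSD, and `0 < η < 1/(4‖S‖)` (stated as
`η * (4‖S‖) < 1`, which covers the convention `1/(4·0) = ∞`), then
`I + η H_o` is invertible and every complex eigenvalue `μ` of `(I + η H_o)⁻¹ H`
satisfies `|1 - η μ| < 1`. Here `H_o = A + S_o` with `A` the antisymmetric part
and `S_o` the off-block-diagonal part of `S` for the block partition `b`. -/
theorem pcgd_spectral_core (d m : ℕ) (H : Matrix (Fin d) (Fin d) ℝ)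
    (b : Fin d → Fin m)
    (S : Matrix (Fin d) (Fin d) ℝ) (hS : S = (1 / 2 : ℝ) • (H + H.transpose))
    (A : Matrix (Fin d) (Fin d) ℝ) (hA : A = (1 / 2 : ℝ) • (H - H.transpose))
    (S_d : Matrix (Fin d) (Fin d) ℝ)
    (hSd : S_d = fun i j => if b i = b j then S i j else 0)
    (S_o : Matrix (Fin d) (Fin d) ℝ) (hSo : S_o = S - S_d)
    (H_o : Matrix (Fin d) (Fin d) ℝ) (hHo : H_o = A + S_o)
    (hpsd : S.PosSemidef) (hinv : IsUnit H)
    (η : ℝ) (hη : 0 < η) (hη' : η * (4 * ‖Matrix.toEuclideanCLM (𝕜 := ℝ) S‖) < 1) :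
    let H_oc : Matrix (Fin d) (Fin d) ℂ := H_o.map (Complex.ofReal)
    let Hc : Matrix (Fin d) (Fin d) ℂ := H.map (Complex.ofReal)
    IsUnit (1 + (η : ℂ) • H_oc) ∧
      ∀ μ : ℂ, (∃ v : Fin d → ℂ, v ≠ 0 ∧
          ((1 + (η : ℂ) • H_oc)⁻¹ * Hc).mulVec v = μ • v) →
        ‖1 - (η : ℂ) * μ‖ < 1 := by
  intro H_oc Hc
  have hHo' : H_o = H - S_d := by rw [hHo, hSo, hA, hS]; module
  have hM : 1 + (η : ℂ) • H_oc = (η : ℂ) • Hc + (1 - η • S_d).map (↑) := by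
    ext i j
    simp only [H_oc, Hc, hHo', Matrix.add_apply, Matrix.sub_apply, Matrix.smul_apply, map_apply,
      one_apply, Complex.coe_smul, Complex.real_smul, smul_eq_mul, Complex.ofReal_sub,
      Complex.ofReal_mul]
    split_ifs <;> push_cast <;> ring
  have hηS : η * ‖toEuclideanCLM (𝕜 := ℝ) S‖ < 1 := by
    nlinarith [norm_nonneg (toEuclideanCLM (𝕜 := ℝ) S)]
  have hP : (1 - η • S_d).PosDef :=
    hSd ▸ posDef_one_sub_smul_blockDiagPart b hpsd.isHermitian hη.le hηS
  have hK := re_star_dotProduct_map_ofReal_mulVec_nonneg (hS ▸ hpsd)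
  have hKu : IsUnit Hc := hinv.map Complex.ofRealHom.mapMatrix
  rw [hM]
  exact ⟨isUnit_smul_add_of_posDef hK hP.map_ofReal hη.le, fun μ ⟨v, hv, hμ⟩ =>
    norm_one_sub_mul_eigenvalue_lt_one hK hKu hP.map_ofReal hη hv hμ⟩
end
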